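/- arXiv:2310.07614 — 14 statements merged into one kernel-verified Lean document; each statement's English description precedes it below -/
import Mathlib

section
/- In a meet-tree, for any three points a, b, c, at least two of the three pairwise meets a⊓b, a⊓c, b⊓c are equal to the triple meet a⊓b⊓c. Equivalently: if a⊓b ≠ a⊓b⊓c, then a⊓c = b⊓c = a⊓b⊓c. -/
/-- Three points lemma in a meet-tree: if `a ⊓ b ≠ a ⊓ b ⊓ c`, then
`a ⊓ c = b ⊓ c = a ⊓ b ⊓ c`.  A meet-tree is a meet-semilattice which is
semilinear: the set of points strictly below any point is a chain. -/
theorem three_points {T : Type*} [SemilatticeInf T]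
    (hsl : ∀ a : T, IsChain (· ≤ ·) {x : T | x < a})
    (a b c : T) (h : a ⊓ b ≠ a ⊓ b ⊓ c) :
    a ⊓ c = a ⊓ b ⊓ c ∧ b ⊓ c = a ⊓ b ⊓ c := by
  have comp : ∀ p x y : T, x ≤ p → y ≤ p → x ≤ y ∨ y ≤ x := by
    intro p x y hx hy
    rcases hx.lt_or_eq with hx | rfl
    · rcases hy.lt_or_eq with hy | rfl
      · rcases eq_or_ne x y with rfl | hne
        · exact Or.inl le_rfl
        · exact hsl p hx hy hne
      · exact Or.inl hx.le
    · exact Or.inr hy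
  have habc : ¬ a ⊓ b ≤ c := by
    intro hc
    exact h (le_antisymm (le_inf le_rfl hc) inf_le_left)
  constructor
  · rcases comp a (a ⊓ b) (a ⊓ c) inf_le_left inf_le_left with hle | hle
    · exact absurd (hle.trans inf_le_right) habc
    · exact le_antisymm (le_inf hle inf_le_right)
        (le_inf (inf_le_left.trans inf_le_left) inf_le_right)
  · rcases comp b (a ⊓ b) (b ⊓ c) inf_le_right inf_le_left with hle | hle
    · exact absurd (hle.trans inf_le_right) habc
    · exact le_antisymm (le_inf hle inf_le_right)
        (le_inf (inf_le_left.trans inf_le_right) inf_le_right)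
end

section
/- In a meet-tree, for any four points a, b, c, d: if a⊓c = b⊓c and a⊓d ≠ b⊓d, then a⊓c = d⊓c. -/
private lemma comp_below {T : Type*} [SemilatticeInf T]
    (hsl : ∀ a : T, IsChain (· ≤ ·) {x : T | x < a})
    {u v w : T} (hu : u ≤ w) (hv : v ≤ w) : u ≤ v ∨ v ≤ u := by
  rcases hu.lt_or_eq with hu' | rfl
  · rcases hv.lt_or_eq with hv' | rfl
    · rcases eq_or_ne u v with rfl | hne
      · exact Or.inl le_rfl
      · exact hsl w hu' hv' hne
    · exact Or.inl hu
  · exact Or.inr hv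

private lemma four_points_aux {T : Type*} [SemilatticeInf T]
    (hsl : ∀ a : T, IsChain (· ≤ ·) {x : T | x < a})
    (a b c d : T) (h1 : a ⊓ c = b ⊓ c) (h2 : a ⊓ d ≠ b ⊓ d)
    (hxy : a ⊓ d ≤ b ⊓ d) : a ⊓ c = d ⊓ c := by
  set e := a ⊓ c with he
  set y := b ⊓ d with hy
  have heb : e ≤ b := h1 ▸ inf_le_left
  have hnye : ¬ y ≤ e := by
    intro hye
    exact h2 (le_antisymm hxy (le_inf (hye.trans inf_le_left) inf_le_right))
  have hey : e < y := by
    rcases comp_below hsl heb (inf_le_left : y ≤ b) with h | h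
    · exact h.lt_of_ne (fun h' => hnye h'.ge)
    · exact absurd h hnye
  have hed : e ≤ d ⊓ c := le_inf (hey.le.trans inf_le_right) inf_le_right
  rcases comp_below hsl (inf_le_left : d ⊓ c ≤ d) (inf_le_right : y ≤ d) with h | h
  · exact le_antisymm hed (h1 ▸ le_inf (h.trans inf_le_left) inf_le_right)
  · exact absurd (h1 ▸ le_inf (inf_le_left : y ≤ b) (h.trans inf_le_right) : y ≤ e) hnye

/-- Four points lemma in a meet-tree: if `a ⊓ c = b ⊓ c` and `a ⊓ d ≠ b ⊓ d`,
then `a ⊓ c = d ⊓ c`. -/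
theorem four_points {T : Type*} [SemilatticeInf T]
    (hsl : ∀ a : T, IsChain (· ≤ ·) {x : T | x < a})
    (a b c d : T) (h1 : a ⊓ c = b ⊓ c) (h2 : a ⊓ d ≠ b ⊓ d) :
    a ⊓ c = d ⊓ c := by
  rcases comp_below hsl (inf_le_right : a ⊓ d ≤ d) (inf_le_right : b ⊓ d ≤ d) with h | h
  · exact four_points_aux hsl a b c d h1 h2 h
  · rw [h1]
    exact four_points_aux hsl b a c d h1.symm (Ne.symm h2) h
end

section
/- In a meet-tree, for any points a, b, d: if a⊓b ≠ a⊓b⊓d (i.e., a⊓b is strictly above the triple meet), then a⊓d = b⊓d = a⊓b⊓d. -/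
/-- In a meet-tree, if `a ⊓ b` is different from (hence strictly above) the triple
meet `a ⊓ b ⊓ d`, then `a ⊓ d = b ⊓ d = a ⊓ b ⊓ d`. -/
theorem three_points_variant {T : Type*} [SemilatticeInf T]
    (hsl : ∀ a : T, IsChain (· ≤ ·) {x : T | x < a})
    (a b d : T) (h : a ⊓ b ≠ a ⊓ b ⊓ d) :
    a ⊓ d = a ⊓ b ⊓ d ∧ b ⊓ d = a ⊓ b ⊓ d := by
  have hnd : ¬ a ⊓ b ≤ d := fun hle => h (le_antisymm (le_inf le_rfl hle) inf_le_left)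
  have key : ∀ x : T, a ⊓ b ≤ x → x ⊓ d ≤ a ⊓ b := by
    intro x hmx
    rcases eq_or_lt_of_le hmx with he | hlt
    · exact he ▸ inf_le_left
    · rcases eq_or_lt_of_le (inf_le_left : x ⊓ d ≤ x) with he2 | hlt2
      · exact absurd (le_trans hmx (he2 ▸ inf_le_right)) hnd
      · rcases eq_or_ne (a ⊓ b) (x ⊓ d) with heq | hne
        · exact heq ▸ le_rfl
        · rcases hsl x hlt hlt2 hne with h1 | h2
          · exact absurd (le_trans h1 inf_le_right) hnd
          · exact h2
  have ha : a ⊓ d = a ⊓ b ⊓ d :=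
    le_antisymm (le_inf (key a inf_le_left) inf_le_right)
      (le_inf (le_trans inf_le_left inf_le_left) inf_le_right)
  have hb : b ⊓ d = a ⊓ b ⊓ d :=
    le_antisymm (le_inf (key b inf_le_right) inf_le_right)
      (le_inf (le_trans inf_le_left inf_le_right) inf_le_right)
  exact ⟨ha, hb⟩
end

section
/- Let T be a meet-tree and Γ ⊆ T. Then Γ is a closed semibranch (a downwards closed chain such that every a ∈ T has a largest element of Γ below or equal to it) if and only if Γ is a branch (a maximal chain) or Γ = {x ∈ T : x ≤ γ} where γ = max Γ; moreover in the latter case the semibranch-projection satisfies π_Γ(a) = a ⊓ γ for all a ∈ T. -/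
/-- A (closed) semibranch of a meet-tree: a downwards closed chain such that every
point has a largest element of the chain below or equal to it. -/
def IsSemibranch {T : Type*} [SemilatticeInf T] (Γ : Set T) : Prop :=
  IsChain (· ≤ ·) Γ ∧ (∀ ⦃x y : T⦄, x ≤ y → y ∈ Γ → x ∈ Γ) ∧
    ∀ a : T, ∃ b : T, IsGreatest {c | c ∈ Γ ∧ c ≤ a} b

/-- Characterisation of semibranches: `Γ` is a semibranch iff it is a branch
(a maximal chain) or `Γ = {x | x ≤ γ}` with `γ = max Γ`, in which case the
semibranch-projection is given by `π_Γ(a) = a ⊓ γ`. -/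
theorem semibranch_char {T : Type*} [SemilatticeInf T]
    (hsl : ∀ a : T, IsChain (· ≤ ·) {x : T | x < a}) (Γ : Set T) :
    IsSemibranch Γ ↔
      (IsMaxChain (· ≤ ·) Γ ∨
        ∃ γ : T, IsGreatest Γ γ ∧ Γ = {x : T | x ≤ γ} ∧
          ∀ a : T, IsGreatest {c | c ∈ Γ ∧ c ≤ a} (a ⊓ γ)) := by
  constructor
  · rintro ⟨hchain, hdc, hproj⟩
    by_cases hg : ∃ γ, IsGreatest Γ γ
    · obtain ⟨γ, hγΓ, hγmax⟩ := hg
      right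
      refine ⟨γ, ⟨hγΓ, hγmax⟩, ?_, ?_⟩
      · ext x
        exact ⟨fun hx => hγmax hx, fun hx => hdc hx hγΓ⟩
      · intro a
        refine ⟨⟨hdc inf_le_right hγΓ, inf_le_left⟩, ?_⟩
        rintro c ⟨hcΓ, hca⟩
        exact le_inf hca (hγmax hcΓ)
    · left
      refine ⟨hchain, fun t htchain hsub => ?_⟩
      refine Set.Subset.antisymm hsub fun a ha => ?_
      obtain ⟨b, ⟨hbΓ, hba⟩, hbmax⟩ := hproj a
      push_neg at hg
      have hnb := hg b
      simp only [IsGreatest, upperBounds, Set.mem_setOf_eq, not_and, not_forall] at hnb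
      obtain ⟨d, hdΓ, hdb⟩ := hnb hbΓ
      have hda : ¬ d ≤ a := fun h => hdb (hbmax ⟨hdΓ, h⟩)
      have hne : d ≠ a := fun h => hda (h ▸ le_refl a)
      rcases htchain (hsub hdΓ) ha hne with h | h
      · exact absurd h hda
      · exact hdc h hdΓ
  · rintro (⟨hchain, hmax⟩ | ⟨γ, ⟨hγΓ, hγmax⟩, hΓeq, hproj⟩)
    · have hdc : ∀ ⦃x y : T⦄, x ≤ y → y ∈ Γ → x ∈ Γ := by
        intro x y hxy hyΓ
        have hch : IsChain (· ≤ ·) (insert x Γ) := by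
          refine hchain.insert fun b hbΓ hne => ?_
          rcases eq_or_ne b y with rfl | hby
          · exact Or.inl hxy
          rcases hchain hbΓ hyΓ hby with hb | hb
          · rcases lt_or_eq_of_le hxy with hx | rfl
            · exact (hsl y (lt_of_le_of_ne hb hby) hx (Ne.symm hne)).symm
            · exact Or.inr hb
          · exact Or.inl (hxy.trans hb)
        have := hmax hch (Set.subset_insert x Γ)
        exact this ▸ Set.mem_insert x Γ
      refine ⟨hchain, hdc, fun a => ?_⟩
      by_cases h : ∃ c ∈ Γ, ¬ c ≤ a
      · obtain ⟨c, hcΓ, hca⟩ := h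
        refine ⟨c ⊓ a, ⟨hdc inf_le_left hcΓ, inf_le_right⟩, ?_⟩
        rintro d ⟨hdΓ, hda⟩
        rcases eq_or_ne d c with rfl | hne
        · exact absurd hda hca
        rcases hchain hdΓ hcΓ hne with h | h
        · exact le_inf h hda
        · exact absurd (h.trans hda) hca
      · push_neg at h
        have hch : IsChain (· ≤ ·) (insert a Γ) :=
          hchain.insert fun b hbΓ _ => Or.inr (h b hbΓ)
        have haΓ : a ∈ Γ := (hmax hch (Set.subset_insert a Γ)) ▸ Set.mem_insert a Γ
        exact ⟨a, ⟨haΓ, le_refl a⟩, fun c hc => hc.2⟩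
    · refine ⟨?_, ?_, fun a => ⟨a ⊓ γ, hproj a⟩⟩
      · intro x hx y hy hne
        rw [hΓeq] at hx hy
        rcases eq_or_ne x γ with rfl | hxγ
        · exact Or.inr hy
        rcases eq_or_ne y γ with rfl | hyγ
        · exact Or.inl hx
        exact hsl γ (lt_of_le_of_ne hx hxγ) (lt_of_le_of_ne hy hyγ) hne
      · intro x y hxy hyΓ
        rw [hΓeq] at hyΓ ⊢
        exact hxy.trans hyΓ
end

section
/- Let T be a meet-tree and let T^∞ be the set of all semibranches of T, ordered by inclusion with intersection as meet. Then (T^∞, ⊆, ∩) is a meet-tree, every element of T^∞ is bounded above by a maximal element, and the maximal elements of T^∞ are exactly the branches of T. Furthermore, the map γ ↦ {x ∈ T : x ≤ γ} is an embedding of meet-trees from T into T^∞. -/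
/-- A maximal chain in a meet-tree is downwards closed. -/
lemma maxChain_downclosed {T : Type*} [SemilatticeInf T]
    (hsl : ∀ a : T, IsChain (· ≤ ·) {x : T | x < a})
    {Γ : Set T} (hΓ : IsMaxChain (· ≤ ·) Γ) ⦃x y : T⦄ (hxy : x ≤ y) (hy : y ∈ Γ) :
    x ∈ Γ := by
  have hins : IsChain (· ≤ ·) (insert x Γ) := by
    refine hΓ.1.insert fun z hz hne => ?_
    rcases eq_or_lt_of_le hxy with rfl | hxlt
    · exact ((hΓ.1 hy hz hne).imp id id)
    rcases eq_or_ne z y with rfl | hzy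
    · exact Or.inl hxy
    have hzley : z ≤ y ∨ y ≤ z := (hΓ.1 hz hy hzy).imp id id
    rcases hzley with hzle | hyle
    · exact (hsl y hxlt (lt_of_le_of_ne hzle hzy) hne).imp id id
    · exact Or.inl (hxy.trans hyle)
  have := hΓ.2 hins (Set.subset_insert _ _)
  rw [this]; exact Set.mem_insert _ _

/-- A maximal chain in a meet-tree is a semibranch. -/
lemma maxChain_isSemibranch {T : Type*} [SemilatticeInf T]
    (hsl : ∀ a : T, IsChain (· ≤ ·) {x : T | x < a})
    {Γ : Set T} (hΓ : IsMaxChain (· ≤ ·) Γ) : IsSemibranch Γ := by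
  have hdc := maxChain_downclosed hsl hΓ
  refine ⟨hΓ.1, hdc, fun a => ?_⟩
  by_cases hcomp : ∀ z ∈ Γ, a ≤ z ∨ z ≤ a
  · have haΓ : a ∈ Γ := by
      have hins : IsChain (· ≤ ·) (insert a Γ) :=
        hΓ.1.insert fun z hz _ => hcomp z hz
      have := hΓ.2 hins (Set.subset_insert _ _)
      rw [this]; exact Set.mem_insert _ _
    exact ⟨a, ⟨haΓ, le_refl a⟩, fun c hc => hc.2⟩
  · push_neg at hcomp
    obtain ⟨c, hc, hc1, hc2⟩ := hcomp
    refine ⟨c ⊓ a, ⟨hdc inf_le_left hc, inf_le_right⟩, ?_⟩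
    rintro s ⟨hsΓ, hsa⟩
    rcases eq_or_ne s c with rfl | hne
    · exact absurd hsa hc2
    rcases hΓ.1 hsΓ hc hne with h | h
    · exact le_inf h hsa
    · exact absurd (h.trans hsa) hc2

/-- The set `T^∞` of semibranches of a meet-tree, ordered by inclusion with
intersection as meet, is again a meet-tree; every semibranch is contained in a
maximal one, the maximal elements are exactly the branches (maximal chains), and
`γ ↦ {x | x ≤ γ}` is an embedding of meet-trees of `T` into `T^∞`. -/
theorem semibranches_form_meet_tree {T : Type*} [SemilatticeInf T]
    (hsl : ∀ a : T, IsChain (· ≤ ·) {x : T | x < a}) :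
    -- intersections of semibranches are semibranches (meets in `T^∞`)
    (∀ Γ₁ Γ₂ : Set T, IsSemibranch Γ₁ → IsSemibranch Γ₂ → IsSemibranch (Γ₁ ∩ Γ₂)) ∧
    -- intersection is the greatest lower bound for inclusion among semibranches
    (∀ Γ₁ Γ₂ Δ : Set T, IsSemibranch Γ₁ → IsSemibranch Γ₂ → IsSemibranch Δ →
      (Δ ⊆ Γ₁ ∩ Γ₂ ↔ Δ ⊆ Γ₁ ∧ Δ ⊆ Γ₂)) ∧
    -- semilinearity of `(T^∞, ⊆)`
    (∀ Γ Γ₁ Γ₂ : Set T, IsSemibranch Γ → IsSemibranch Γ₁ → IsSemibranch Γ₂ →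
      Γ₁ ⊆ Γ → Γ₂ ⊆ Γ → Γ₁ ⊆ Γ₂ ∨ Γ₂ ⊆ Γ₁) ∧
    -- every semibranch is bounded by a maximal one
    (∀ Γ : Set T, IsSemibranch Γ → ∃ Γ' : Set T, IsSemibranch Γ' ∧ Γ ⊆ Γ' ∧
      ∀ Γ'' : Set T, IsSemibranch Γ'' → Γ' ⊆ Γ'' → Γ'' = Γ') ∧
    -- the maximal semibranches are exactly the branches of `T`
    (∀ Γ : Set T, IsSemibranch Γ →
      ((∀ Γ'' : Set T, IsSemibranch Γ'' → Γ ⊆ Γ'' → Γ'' = Γ) ↔ IsMaxChain (· ≤ ·) Γ)) ∧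
    -- the canonical map `γ ↦ T_{≤ γ}` is an embedding of meet-trees
    (∀ γ : T, IsSemibranch {x : T | x ≤ γ}) ∧
    (∀ γ δ : T, γ ≤ δ ↔ ({x : T | x ≤ γ} : Set T) ⊆ {x : T | x ≤ δ}) ∧
    (∀ γ δ : T, ({x : T | x ≤ γ ⊓ δ} : Set T) = {x : T | x ≤ γ} ∩ {x : T | x ≤ δ}) := by
  refine ⟨?_, ?_, ?_, ?_, ?_, ?_, ?_, ?_⟩
  · -- intersections
    rintro Γ₁ Γ₂ ⟨hc1, hd1, hg1⟩ ⟨hc2, hd2, hg2⟩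
    refine ⟨hc1.mono Set.inter_subset_left,
      fun x y hxy hy => ⟨hd1 hxy hy.1, hd2 hxy hy.2⟩, fun a => ?_⟩
    obtain ⟨b1, ⟨hb1Γ, hb1a⟩, hb1g⟩ := hg1 a
    obtain ⟨b2, ⟨hb2Γ, hb2a⟩, hb2g⟩ := hg2 a
    refine ⟨b1 ⊓ b2, ⟨⟨hd1 inf_le_left hb1Γ, hd2 inf_le_right hb2Γ⟩,
      inf_le_left.trans hb1a⟩, ?_⟩
    rintro c ⟨⟨hcΓ1, hcΓ2⟩, hca⟩
    exact le_inf (hb1g ⟨hcΓ1, hca⟩) (hb2g ⟨hcΓ2, hca⟩)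
  · -- glb
    intro Γ₁ Γ₂ Δ _ _ _
    exact Set.subset_inter_iff
  · -- semilinearity
    rintro Γ Γ₁ Γ₂ ⟨hcΓ, _, _⟩ ⟨_, hd1, _⟩ ⟨_, hd2, _⟩ hs1 hs2
    by_cases h : Γ₁ ⊆ Γ₂
    · exact Or.inl h
    · obtain ⟨x, hx1, hx2⟩ := Set.not_subset.mp h
      refine Or.inr fun y hy => ?_
      rcases eq_or_ne y x with rfl | hne
      · exact hx1
      rcases hcΓ (hs2 hy) (hs1 hx1) hne with h' | h'
      · exact hd1 h' hx1
      · exact absurd (hd2 h' hy) hx2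
  · -- maximal semibranch above any semibranch
    rintro Γ hΓ
    obtain ⟨Γ', hΓ'max, hsub⟩ := hΓ.1.exists_maxChain
    refine ⟨Γ', maxChain_isSemibranch hsl hΓ'max, hsub, fun Γ'' hΓ'' hsub' => ?_⟩
    exact (hΓ'max.2 hΓ''.1 hsub').symm
  · -- maximal semibranches are branches
    rintro Γ hΓ
    constructor
    · intro hmax
      obtain ⟨Γ', hΓ'max, hsub⟩ := hΓ.1.exists_maxChain
      have := hmax Γ' (maxChain_isSemibranch hsl hΓ'max) hsub
      rwa [← this]
    · intro hmax Γ'' hΓ'' hsub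
      exact (hmax.2 hΓ''.1 hsub).symm
  · -- principal downsets are semibranches
    intro γ
    refine ⟨?_, fun x y hxy hy => hxy.trans hy, fun a => ?_⟩
    · intro x hx y hy hne
      rcases eq_or_lt_of_le (hx : x ≤ γ) with rfl | hxlt
      · exact Or.inr hy
      rcases eq_or_lt_of_le (hy : y ≤ γ) with rfl | hylt
      · exact Or.inl hx
      exact (hsl γ hxlt hylt hne).imp id id
    · exact ⟨γ ⊓ a, ⟨inf_le_left, inf_le_right⟩, fun c hc => le_inf hc.1 hc.2⟩
  · -- order embedding
    intro γ δ
    exact ⟨fun h x hx => le_trans hx h, fun h => h (le_refl γ)⟩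
  · -- meets
    intro γ δ
    ext x
    simp [le_inf_iff]
end

section
/- In a meet-tree, the subsemilattice generated by a set X under the meet operation equals {x ⊓ y : x, y ∈ X}; that is, the set of pairwise meets of elements of X is closed under meet. -/
/-- The meet-subsemilattice generated by a set `X`: the closure of `X` under
the binary meet operation. -/
inductive MeetGen {T : Type*} [SemilatticeInf T] (X : Set T) : T → Prop
  | base {x : T} : x ∈ X → MeetGen X x
  | inf {a b : T} : MeetGen X a → MeetGen X b → MeetGen X (a ⊓ b)

/-- In a semilinear meet-semilattice, the meet of three elements equals the
meet of some two of them. -/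
lemma meet_three_eq_meet_two {T : Type*} [SemilatticeInf T]
    (hsl : ∀ a : T, IsChain (· ≤ ·) {x : T | x < a}) (a b c : T) :
    a ⊓ b ⊓ c = a ⊓ b ∨ a ⊓ b ⊓ c = a ⊓ c ∨ a ⊓ b ⊓ c = b ⊓ c := by
  by_cases h1 : a ⊓ b = a
  · right; left
    rw [h1]
  by_cases h2 : a ⊓ c = a
  · left
    have hac : a ≤ c := by rw [← h2]; exact inf_le_right
    exact inf_eq_left.mpr (le_trans inf_le_left hac)
  -- both a ⊓ b < a and a ⊓ c < a, so comparable
  have hb : a ⊓ b < a := lt_of_le_of_ne inf_le_left h1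
  have hc : a ⊓ c < a := lt_of_le_of_ne inf_le_left h2
  by_cases heq : a ⊓ b = a ⊓ c
  · left
    have : a ⊓ b ≤ c := heq ▸ inf_le_right
    exact inf_eq_left.mpr this
  rcases hsl a hb hc heq with h | h
  · -- a ⊓ b ≤ a ⊓ c, so a ⊓ b ≤ c
    left
    exact inf_eq_left.mpr (le_trans h inf_le_right)
  · -- a ⊓ c ≤ a ⊓ b
    right; left
    apply le_antisymm
    · exact le_inf (le_trans inf_le_left inf_le_left) inf_le_right
    · exact le_inf (le_trans h (le_inf inf_le_left inf_le_right)) inf_le_right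

/-- In a meet-tree, the meet-subsemilattice generated by `X` equals the set of
pairwise meets of elements of `X`. -/
theorem meetGen_eq_pairwise_meets {T : Type*} [SemilatticeInf T]
    (hsl : ∀ a : T, IsChain (· ≤ ·) {x : T | x < a}) (X : Set T) :
    {t : T | MeetGen X t} = {t : T | ∃ x ∈ X, ∃ y ∈ X, t = x ⊓ y} := by
  ext t
  simp only [Set.mem_setOf_eq]
  constructor
  · intro h
    induction h with
    | base hx => exact ⟨_, hx, _, hx, (inf_idem _).symm⟩
    | inf ha hb iha ihb =>
      obtain ⟨x, hx, y, hy, rfl⟩ := iha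
      obtain ⟨u, hu, v, hv, rfl⟩ := ihb
      rcases meet_three_eq_meet_two hsl x y (u ⊓ v) with h | h | h
      · exact ⟨x, hx, y, hy, h⟩
      · rw [h, ← inf_assoc]
        rcases meet_three_eq_meet_two hsl x u v with h' | h' | h'
        · exact ⟨x, hx, u, hu, h'⟩
        · exact ⟨x, hx, v, hv, h'⟩
        · exact ⟨u, hu, v, hv, h'⟩
      · rw [h, ← inf_assoc]
        rcases meet_three_eq_meet_two hsl y u v with h' | h' | h'
        · exact ⟨y, hy, u, hu, h'⟩
        · exact ⟨y, hy, v, hv, h'⟩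
        · exact ⟨u, hu, v, hv, h'⟩
  · rintro ⟨x, hx, y, hy, rfl⟩
    exact MeetGen.inf (MeetGen.base hx) (MeetGen.base hy)
end

section
/- In a meet-tree, for any finite nonempty subset X and any element x ∈ X, the infimum of X equals min{x ⊓ y : y ∈ X}; in particular finite nonempty subsets of a meet-tree have an infimum. -/
open Set

theorem isChain_Iic_of_isChain_Iio {α : Type*} [PartialOrder α] {a : α}
    (h : IsChain (· ≤ ·) (Iio a)) : IsChain (· ≤ ·) (Iic a) := by
  rw [← Iio_insert]
  exact h.insert fun b hb _ => Or.inr (le_of_lt hb)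

theorem IsChain.isLeast_of_minimal {α : Type*} [Preorder α] {s : Set α} {m : α}
    (hs : IsChain (· ≤ ·) s) (hm : Minimal (· ∈ s) m) : IsLeast s m :=
  ⟨hm.prop, fun _ ha => (hs.total hm.prop ha).elim id (hm.le_of_le ha)⟩

theorem IsLeast.isGLB_of_image_inf_left {α : Type*} [SemilatticeInf α] {X : Set α} {x m : α}
    (hx : x ∈ X) (h : IsLeast ((fun y => x ⊓ y) '' X) m) : IsGLB X m := by
  obtain ⟨⟨y₀, hy₀, rfl⟩, hle⟩ := h
  exact ⟨fun y hy => (hle ⟨y, hy, rfl⟩).trans inf_le_right,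
    fun b hb => le_inf (hb hx) (hb hy₀)⟩

/-- In a meet-tree, any finite nonempty subset `X` has an infimum, and for any
`x ∈ X` the infimum of `X` is the minimum of the chain `{x ⊓ y : y ∈ X}`. -/
theorem finite_inf_eq_min {T : Type*} [SemilatticeInf T]
    (hsl : ∀ a : T, IsChain (· ≤ ·) {x : T | x < a})
    (X : Set T) (hX : X.Finite) (hne : X.Nonempty) (x : T) (hx : x ∈ X) :
    ∃ m : T, IsLeast ((fun y => x ⊓ y) '' X) m ∧ IsGLB X m := by
  have hchain : IsChain (· ≤ ·) ((fun y => x ⊓ y) '' X) :=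
    (isChain_Iic_of_isChain_Iio (hsl x)).mono (image_subset_iff.2 fun _ _ => inf_le_left)
  obtain ⟨m, hm⟩ := (hX.image (x ⊓ ·)).exists_minimal (hne.image _)
  have hleast := hchain.isLeast_of_minimal hm
  exact ⟨m, hleast, hleast.isGLB_of_image_inf_left hx⟩
end

section
/- Let T be a meet-tree, Γ a semibranch, and X ⊆ T. Then the substructure of (T, ≤, ⊓, Γ, π_Γ) generated by X equals ⟨X⟩_⊓ ∪ {π_Γ(x) : x ∈ X}, where ⟨X⟩_⊓ is the meet-subsemilattice generated by X; moreover the intersection of this generated substructure with Γ is exactly {π_Γ(x) : x ∈ X}. -/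
/-- The substructure generated by `X` in the language of semibranched meet-trees:
the closure of `X` under the meet operation and the semibranch-projection `π`. -/
inductive SBGen {T : Type*} [SemilatticeInf T] (π : T → T) (X : Set T) : T → Prop
  | base {x : T} : x ∈ X → SBGen π X x
  | inf {a b : T} : SBGen π X a → SBGen π X b → SBGen π X (a ⊓ b)
  | proj {a : T} : SBGen π X a → SBGen π X (π a)

/-- For a semibranch `Γ` with projection `π`, the generated substructure of a set
`X` in the semibranched language equals `⟨X⟩_⊓ ∪ π '' X`, and its intersection
with `Γ` is exactly `π '' X`. -/
theorem sbGen_eq {T : Type*} [SemilatticeInf T]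
    (hsl : ∀ a : T, IsChain (· ≤ ·) {x : T | x < a})
    (Γ : Set T) (hchain : IsChain (· ≤ ·) Γ)
    (hdc : ∀ ⦃x y : T⦄, x ≤ y → y ∈ Γ → x ∈ Γ)
    (π : T → T) (hπ : ∀ a : T, IsGreatest {c | c ∈ Γ ∧ c ≤ a} (π a))
    (X : Set T) :
    {t : T | SBGen π X t} = {t : T | MeetGen X t} ∪ π '' X ∧
    {t : T | SBGen π X t} ∩ Γ = π '' X := by
  -- basic facts about π
  have hπΓ : ∀ a, π a ∈ Γ := fun a => (hπ a).1.1
  have hπle : ∀ a, π a ≤ a := fun a => (hπ a).1.2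
  have hmax : ∀ a c, c ∈ Γ → c ≤ a → c ≤ π a := fun a c h1 h2 => (hπ a).2 ⟨h1, h2⟩
  have hfix : ∀ c, c ∈ Γ → π c = c := fun c hc =>
    le_antisymm (hπle c) (hmax c c hc le_rfl)
  have hinf : ∀ a b, π (a ⊓ b) = π a ⊓ π b := by
    intro a b
    apply le_antisymm
    · exact le_inf (hmax a _ (hπΓ _) ((hπle _).trans inf_le_left))
        (hmax b _ (hπΓ _) ((hπle _).trans inf_le_right))
    · exact hmax _ _ (hdc inf_le_left (hπΓ a))
        (le_inf (inf_le_left.trans (hπle a)) (inf_le_right.trans (hπle b)))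
  -- comparability of elements of Γ
  have hcmp : ∀ c d, c ∈ Γ → d ∈ Γ → c ⊓ d = c ∨ c ⊓ d = d := by
    intro c d hc hd
    rcases eq_or_ne c d with rfl | hne
    · exact Or.inl (inf_idem c)
    rcases hchain hc hd hne with h | h
    · exact Or.inl (inf_eq_left.mpr h)
    · exact Or.inr (inf_eq_right.mpr h)
  -- π of a MeetGen element lies in π '' X
  have πmeet : ∀ m, MeetGen X m → π m ∈ π '' X := by
    intro m hm
    induction hm with
    | base hx => exact ⟨_, hx, rfl⟩
    | inf ha hb iha ihb =>
      rw [hinf]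
      rcases hcmp _ _ (hπΓ _) (hπΓ _) with h | h <;> rw [h]
      · exact iha
      · exact ihb
  -- key: meeting with an element of Γ
  have key : ∀ c m, c ∈ Γ → c ⊓ m = c ⊓ π m := by
    intro c m hc
    have h1 : c ⊓ m ∈ Γ := hdc inf_le_left hc
    calc c ⊓ m = π (c ⊓ m) := (hfix _ h1).symm
      _ = π c ⊓ π m := hinf c m
      _ = c ⊓ π m := by rw [hfix c hc]
  have keyset : ∀ c m, c ∈ π '' X → MeetGen X m → c ⊓ m ∈ π '' X := by
    intro c m hc hm
    have hcΓ : c ∈ Γ := by obtain ⟨x, _, rfl⟩ := hc; exact hπΓ x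
    rw [key c m hcΓ]
    obtain ⟨y, hy, hyeq⟩ := πmeet m hm
    rw [← hyeq]
    rcases hcmp c (π y) hcΓ (hπΓ y) with h | h <;> rw [h]
    · exact hc
    · exact ⟨y, hy, rfl⟩
  have main : {t : T | SBGen π X t} = {t : T | MeetGen X t} ∪ π '' X := by
    ext t
    constructor
    · intro ht
      induction ht with
      | base hx => exact Or.inl (MeetGen.base hx)
      | inf ha hb iha ihb =>
        rcases iha with ha' | ha' <;> rcases ihb with hb' | hb'
        · exact Or.inl (MeetGen.inf ha' hb')
        · exact Or.inr (by rw [inf_comm]; exact keyset _ _ hb' ha')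
        · exact Or.inr (keyset _ _ ha' hb')
        · refine Or.inr ?_
          obtain ⟨x, hx, rfl⟩ := ha'
          obtain ⟨y, hy, rfl⟩ := hb'
          rcases hcmp _ _ (hπΓ x) (hπΓ y) with h | h <;> rw [h]
          · exact ⟨x, hx, rfl⟩
          · exact ⟨y, hy, rfl⟩
      | proj ha iha =>
        rcases iha with ha' | ha'
        · exact Or.inr (πmeet _ ha')
        · obtain ⟨x, hx, rfl⟩ := ha'
          exact Or.inr ⟨x, hx, by rw [hfix _ (hπΓ x)]⟩
    · rintro (ht | ⟨x, hx, rfl⟩)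
      · induction ht with
        | base hx => exact SBGen.base hx
        | inf _ _ iha ihb => exact SBGen.inf iha ihb
      · exact SBGen.proj (SBGen.base hx)
  refine ⟨main, ?_⟩
  ext t
  constructor
  · rintro ⟨ht, htΓ⟩
    rw [main] at ht
    rcases ht with ht | ht
    · have := πmeet t ht
      rwa [hfix t htΓ] at this
    · exact ht
  · rintro ⟨x, hx, rfl⟩
    exact ⟨SBGen.proj (SBGen.base hx), hπΓ x⟩
end

section
/- Let T be a meet-tree, γ a point, C a finite subset of T, and a, b elements with a > γ and b > γ. Suppose neither a nor b lies in the same open cone above γ as any element of C (i.e., a ⊓ c ≤ γ and b ⊓ c ≤ γ for all c ∈ C with c > γ, and more generally a ∉ cone_γ(C) and b ∉ cone_γ(C)). Then for every element z of the meet-subsemilattice generated by C ∪ {γ}: z ≤ a iff z ≤ γ iff z ≤ b; moreover the subsemilattice generated by C ∪ {γ, a} equals ⟨C ∪ {γ}⟩ ∪ {a} and similarly for b, and the map fixing ⟨C ∪ {γ}⟩ pointwise and sending a to b is an isomorphism of meet-semilattices with order. -/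
section Aux
variable {T : Type*} [SemilatticeInf T]

lemma meetgen_mono {X Y : Set T} (h : X ⊆ Y) {z : T} (hz : MeetGen X z) :
    MeetGen Y z := by
  induction hz with
  | base hx => exact MeetGen.base (h hx)
  | inf _ _ ihu ihv => exact MeetGen.inf ihu ihv

lemma meetgen_key (hsl : ∀ a : T, IsChain (· ≤ ·) {x : T | x < a})
    (γ : T) (C : Set T) (a : T) (ha : γ < a)
    (haC : ∀ c ∈ C, γ < c → a ⊓ c ≤ γ) :
    ∀ z : T, MeetGen (C ∪ {γ}) z → a ⊓ z ≤ γ := by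
  intro z hz
  induction hz with
  | @base x hx =>
    rcases hx with hx | hx
    · by_cases hγx : γ < x
      · exact haC x hx hγx
      · rcases lt_or_eq_of_le (inf_le_left : a ⊓ x ≤ a) with hlt | heq
        · rcases eq_or_ne (a ⊓ x) γ with h | hne
          · exact h.le
          · rcases (hsl a) (Set.mem_setOf.2 hlt) (Set.mem_setOf.2 ha) hne with h | h
            · exact h
            · exact absurd (lt_of_lt_of_le (h.lt_of_ne hne.symm) inf_le_right) hγx
        · exact absurd (lt_of_lt_of_le ha (heq.symm.le.trans inf_le_right)) hγx
    · rcases hx with rfl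
      exact inf_le_right
  | @inf u v hu hv ihu ihv =>
    exact le_trans (inf_le_inf_left a inf_le_left) ihu

lemma meetgen_inf_eq (hsl : ∀ a : T, IsChain (· ≤ ·) {x : T | x < a})
    (γ : T) (C : Set T) (a : T) (ha : γ < a)
    (haC : ∀ c ∈ C, γ < c → a ⊓ c ≤ γ) :
    ∀ z : T, MeetGen (C ∪ {γ}) z → z ⊓ a = z ⊓ γ := by
  intro z hz
  refine le_antisymm (le_inf inf_le_left ?_) (le_inf inf_le_left (inf_le_right.trans ha.le))
  rw [inf_comm]
  exact meetgen_key hsl γ C a ha haC z hz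

lemma meetgen_notMem (hsl : ∀ a : T, IsChain (· ≤ ·) {x : T | x < a})
    (γ : T) (C : Set T) (a : T) (ha : γ < a)
    (haC : ∀ c ∈ C, γ < c → a ⊓ c ≤ γ) :
    ¬ MeetGen (C ∪ {γ}) a := by
  intro h
  have h2 := meetgen_key hsl γ C a ha haC a h
  rw [inf_idem] at h2
  exact ha.not_ge h2

lemma meetgen_insert_iff (hsl : ∀ a : T, IsChain (· ≤ ·) {x : T | x < a})
    (γ : T) (C : Set T) (a : T) (ha : γ < a)
    (haC : ∀ c ∈ C, γ < c → a ⊓ c ≤ γ) :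
    ∀ t : T, MeetGen (C ∪ {γ, a}) t ↔ MeetGen (C ∪ {γ}) t ∨ t = a := by
  intro t
  constructor
  · intro ht
    induction ht with
    | @base x hx =>
      rcases hx with hx | hx | hx
      · exact Or.inl (MeetGen.base (Or.inl hx))
      · exact Or.inl (MeetGen.base (Or.inr hx))
      · exact Or.inr hx
    | @inf u v hu hv ihu ihv =>
      rcases ihu with ihu | hu'
      · rcases ihv with ihv | hv'
        · exact Or.inl (MeetGen.inf ihu ihv)
        · left
          rw [hv', meetgen_inf_eq hsl γ C a ha haC u ihu]
          exact MeetGen.inf ihu (MeetGen.base (Or.inr rfl))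
      · rcases ihv with ihv | hv'
        · left
          rw [hu', inf_comm, meetgen_inf_eq hsl γ C a ha haC v ihv]
          exact MeetGen.inf ihv (MeetGen.base (Or.inr rfl))
        · right
          rw [hu', hv', inf_idem]
  · rintro (ht | h)
    · exact meetgen_mono
        (Set.union_subset_union_right C (Set.singleton_subset_iff.2 (Set.mem_insert γ {a}))) ht
    · rw [h]
      exact MeetGen.base (Or.inr (Or.inr rfl))

end Aux

/-- Cones above a point are indiscernible: if `a, b > γ` lie in no cone above `γ`
of an element of the finite set `C`, then every element `z` of `⟨C ∪ {γ}⟩`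
satisfies `z ≤ a ↔ z ≤ γ ↔ z ≤ b`; moreover `⟨C ∪ {γ, a}⟩ = ⟨C ∪ {γ}⟩ ∪ {a}`
(similarly for `b`), and the map fixing `⟨C ∪ {γ}⟩` pointwise and sending `a`
to `b` is an isomorphism of ordered meet-semilattices between the generated
structures. -/
theorem cones_indiscernible {T : Type*} [SemilatticeInf T]
    (hsl : ∀ a : T, IsChain (· ≤ ·) {x : T | x < a})
    (γ : T) (C : Set T) (hC : C.Finite) (a b : T)
    (ha : γ < a) (hb : γ < b)
    (haC : ∀ c ∈ C, γ < c → a ⊓ c ≤ γ)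
    (hbC : ∀ c ∈ C, γ < c → b ⊓ c ≤ γ) :
    (∀ z : T, MeetGen (C ∪ {γ}) z → ((z ≤ a ↔ z ≤ γ) ∧ (z ≤ b ↔ z ≤ γ))) ∧
    {t : T | MeetGen (C ∪ {γ, a}) t} = {t : T | MeetGen (C ∪ {γ}) t} ∪ {a} ∧
    {t : T | MeetGen (C ∪ {γ, b}) t} = {t : T | MeetGen (C ∪ {γ}) t} ∪ {b} ∧
    ∃ f : T → T,
      (∀ z : T, MeetGen (C ∪ {γ}) z → f z = z) ∧ f a = b ∧
      f '' {t : T | MeetGen (C ∪ {γ, a}) t} = {t : T | MeetGen (C ∪ {γ, b}) t} ∧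
      (∀ z w : T, MeetGen (C ∪ {γ, a}) z → MeetGen (C ∪ {γ, a}) w →
        ((z ≤ w ↔ f z ≤ f w) ∧ f (z ⊓ w) = f z ⊓ f w)) := by
  have keyA := meetgen_key hsl γ C a ha haC
  have keyB := meetgen_key hsl γ C b hb hbC
  have infA := meetgen_inf_eq hsl γ C a ha haC
  have infB := meetgen_inf_eq hsl γ C b hb hbC
  have notA := meetgen_notMem hsl γ C a ha haC
  have notB := meetgen_notMem hsl γ C b hb hbC
  have iffA := meetgen_insert_iff hsl γ C a ha haC
  have iffB := meetgen_insert_iff hsl γ C b hb hbC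
  have part1 : ∀ z : T, MeetGen (C ∪ {γ}) z → ((z ≤ a ↔ z ≤ γ) ∧ (z ≤ b ↔ z ≤ γ)) := by
    intro z hz
    constructor
    · exact ⟨fun h => (le_inf h le_rfl).trans (keyA z hz), fun h => h.trans ha.le⟩
    · exact ⟨fun h => (le_inf h le_rfl).trans (keyB z hz), fun h => h.trans hb.le⟩
  refine ⟨part1, ?_, ?_, ?_⟩
  · ext t
    simp only [Set.mem_union, Set.mem_setOf_eq, Set.mem_singleton_iff]
    exact iffA t
  · ext t
    simp only [Set.mem_union, Set.mem_setOf_eq, Set.mem_singleton_iff]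
    exact iffB t
  classical
  refine ⟨fun z => if z = a then b else z, ?_, if_pos rfl, ?_, ?_⟩
  · intro z hz
    exact if_neg (fun (h : z = a) => notA (h ▸ hz))
  · ext t
    simp only [Set.mem_image, Set.mem_setOf_eq, iffA, iffB]
    constructor
    · rintro ⟨z, hz | hza, rfl⟩
      · rw [if_neg (fun (h : z = a) => notA (h ▸ hz))]
        exact Or.inl hz
      · rw [hza, if_pos rfl]
        exact Or.inr rfl
    · rintro (ht | rfl)
      · exact ⟨t, Or.inl ht, if_neg (fun (h : t = a) => notA (h ▸ ht))⟩
      · exact ⟨a, Or.inr rfl, if_pos rfl⟩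
  · intro z w hz hw
    beta_reduce
    rcases (iffA z).1 hz with hz' | hza
    · rcases (iffA w).1 hw with hw' | hwa
      · rw [if_neg (fun (h : z = a) => notA (h ▸ hz')),
          if_neg (fun (h : w = a) => notA (h ▸ hw')),
          if_neg (fun (h : z ⊓ w = a) => notA (h ▸ MeetGen.inf hz' hw'))]
        exact ⟨Iff.rfl, rfl⟩
      · -- w = a
        have hmem : MeetGen (C ∪ {γ}) (z ⊓ a) := by
          rw [infA z hz']
          exact MeetGen.inf hz' (MeetGen.base (Or.inr rfl))
        rw [hwa, if_pos rfl, if_neg (fun (h : z = a) => notA (h ▸ hz')),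
          if_neg (fun (h : z ⊓ a = a) => notA (h ▸ hmem)), infA z hz', infB z hz']
        exact ⟨((part1 z hz').1).trans ((part1 z hz').2).symm, rfl⟩
    · rcases (iffA w).1 hw with hw' | hwa
      · -- z = a
        have hmem : MeetGen (C ∪ {γ}) (a ⊓ w) := by
          rw [inf_comm a w, infA w hw']
          exact MeetGen.inf hw' (MeetGen.base (Or.inr rfl))
        have hinf : a ⊓ w = b ⊓ w := by
          rw [inf_comm a w, infA w hw', ← infB w hw', inf_comm w b]
        rw [hza, if_pos rfl, if_neg (fun (h : w = a) => notA (h ▸ hw')),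
          if_neg (fun (h : a ⊓ w = a) => notA (h ▸ hmem)), hinf]
        refine ⟨⟨fun h => ?_, fun h => ?_⟩, rfl⟩
        · exact absurd ((le_inf le_rfl h).trans (keyA w hw')) ha.not_ge
        · exact absurd ((le_inf le_rfl h).trans (keyB w hw')) hb.not_ge
      · rw [hza, hwa]
        simp
end

section
/- Let T be a meet-tree, γ a point, and A, B, C subsets of T with A γ-cone-independent of B over C. Then cone_γ(A ∪ C) ∩ cone_γ(B ∪ C) = cone_γ(C). -/
/-- `⟨X⟩_γ`: the meet-subsemilattice generated by `X ∪ {γ}`. -/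
def clγ {T : Type*} [SemilatticeInf T] (γ : T) (X : Set T) : Set T :=
  {t : T | MeetGen (X ∪ {γ}) t}

/-- The union of the open cones above `γ` of the elements of `X` that are
strictly above `γ`. -/
def coneSet {T : Type*} [SemilatticeInf T] (γ : T) (X : Set T) : Set T :=
  {y : T | γ < y ∧ ∃ x ∈ X, γ < x ∧ γ < y ⊓ x}

/-- `A` is `γ`-cone-independent of `B` over `C`. -/
def ConeIndep {T : Type*} [SemilatticeInf T] (γ : T) (A C B : Set T) : Prop :=
  (∀ a ∈ clγ γ (A ∪ C), ∀ b ∈ clγ γ (B ∪ C), b ≤ a →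
      ∃ c ∈ clγ γ C, b ≤ c ∧ c ≤ a) ∧
  (∀ a ∈ clγ γ (A ∪ C), ∀ b ∈ clγ γ (B ∪ C), a ⊓ b ∉ clγ γ C →
      ∃ c ∈ clγ γ C, a ⊓ c ≠ b ⊓ c)

private lemma comp_below_s11 {T : Type*} [SemilatticeInf T]
    (hsl : ∀ a : T, IsChain (· ≤ ·) {x : T | x < a})
    {x y z : T} (hx : x ≤ z) (hy : y ≤ z) : x ≤ y ∨ y ≤ x := by
  rcases eq_or_lt_of_le hx with rfl | hx'
  · exact Or.inr hy
  rcases eq_or_lt_of_le hy with rfl | hy'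
  · exact Or.inl hx'.le
  rcases eq_or_ne x y with rfl | hne
  · exact Or.inl le_rfl
  exact hsl z hx' hy' hne

private lemma meetgen_above {T : Type*} [SemilatticeInf T] {X : Set T} {γ t : T}
    (ht : MeetGen (X ∪ {γ}) t) (hγ : γ < t) : ∃ x ∈ X, t ≤ x := by
  induction ht with
  | base hx =>
      rcases hx with hx | hx
      · exact ⟨_, hx, le_rfl⟩
      · exact absurd hγ (by simp_all)
  | inf ha hb iha ihb =>
      obtain ⟨x, hx, hax⟩ := iha (lt_of_lt_of_le hγ inf_le_left)
      exact ⟨x, hx, inf_le_left.trans hax⟩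

private lemma key_lt {T : Type*} [SemilatticeInf T]
    (hsl : ∀ a : T, IsChain (· ≤ ·) {x : T | x < a})
    {a b c : T} (h : a ⊓ c < b ⊓ c) : a ⊓ b ≤ c := by
  rcases comp_below_s11 hsl (inf_le_left : a ⊓ b ≤ a) (inf_le_left : a ⊓ c ≤ a) with hpq | hqp
  · exact hpq.trans inf_le_right
  · rcases comp_below_s11 hsl (inf_le_right : a ⊓ b ≤ b) (inf_le_left : b ⊓ c ≤ b) with hpr | hrp
    · exact hpr.trans inf_le_right
    · exact absurd (le_inf (hrp.trans inf_le_left) inf_le_right) h.not_ge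

private lemma key_ne {T : Type*} [SemilatticeInf T]
    (hsl : ∀ a : T, IsChain (· ≤ ·) {x : T | x < a})
    {a b c : T} (h : a ⊓ c ≠ b ⊓ c) : a ⊓ b ≤ c := by
  rcases comp_below_s11 hsl (inf_le_right : a ⊓ c ≤ c) (inf_le_right : b ⊓ c ≤ c) with h1 | h1
  · exact key_lt hsl (lt_of_le_of_ne h1 h)
  · rw [inf_comm a b]
    exact key_lt hsl (lt_of_le_of_ne h1 (Ne.symm h))

/-- If `A ⫝^γ_C B`, then `cone_γ(A ∪ C) ∩ cone_γ(B ∪ C) = cone_γ(C)`. -/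
theorem coneIndep_cones {T : Type*} [SemilatticeInf T]
    (hsl : ∀ a : T, IsChain (· ≤ ·) {x : T | x < a})
    (γ : T) (A B C : Set T) (h : ConeIndep γ A C B) :
    coneSet γ (A ∪ C) ∩ coneSet γ (B ∪ C) = coneSet γ C := by
  ext y
  constructor
  · rintro ⟨⟨hγy, a, ha, hγa, hya⟩, ⟨_, b, hb, hγb, hyb⟩⟩
    -- w := y ⊓ a ⊓ b > γ
    have hw : γ < y ⊓ a ⊓ b := by
      rcases comp_below_s11 hsl (inf_le_left : y ⊓ a ≤ y) (inf_le_left : y ⊓ b ≤ y) with hc | hc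
      · have : y ⊓ a ⊓ b = y ⊓ a := le_antisymm inf_le_left
          (le_inf le_rfl (hc.trans inf_le_right))
        rw [this]; exact hya
      · have : y ⊓ a ⊓ b = y ⊓ b := by
          rw [inf_assoc, inf_comm a b, ← inf_assoc]
          exact le_antisymm inf_le_left (le_inf le_rfl (hc.trans inf_le_right))
        rw [this]; exact hyb
    -- helper to conclude from some c in clγ C with a ⊓ b ≤ c
    have conclude : ∀ c : T, MeetGen (C ∪ {γ}) c → a ⊓ b ≤ c → y ∈ coneSet γ C := by
      intro c hc habc
      have hab' : y ⊓ a ⊓ b ≤ a ⊓ b := le_inf (inf_le_left.trans inf_le_right) inf_le_right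
      have hγc : γ < c := lt_of_lt_of_le (hw.trans_le hab') habc
      obtain ⟨c', hc', hcc'⟩ := meetgen_above hc hγc
      refine ⟨hγy, c', hc', hγc.trans_le hcc', ?_⟩
      have : y ⊓ a ⊓ b ≤ y ⊓ c' :=
        le_inf (inf_le_left.trans inf_le_left) (hab'.trans (habc.trans hcc'))
      exact hw.trans_le this
    rcases ha with ha | ha
    · rcases hb with hb | hb
      · -- a ∈ A, b ∈ B
        by_cases hab : a ⊓ b ∈ clγ γ C
        · exact conclude _ hab le_rfl
        · obtain ⟨c, hc, hne⟩ := h.2 a (MeetGen.base (Or.inl (Or.inl ha))) b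
            (MeetGen.base (Or.inl (Or.inl hb))) hab
          exact conclude c hc (key_ne hsl hne)
      · exact conclude b (MeetGen.base (Or.inl hb)) inf_le_right
    · exact conclude a (MeetGen.base (Or.inl ha)) inf_le_left
  · rintro ⟨hγy, c, hc, hγc, hyc⟩
    exact ⟨⟨hγy, c, Or.inr hc, hγc, hyc⟩, ⟨hγy, c, Or.inr hc, hγc, hyc⟩⟩
end

section
/- Let T be a meet-tree and γ a point. γ-cone-independence satisfies right base monotonicity: if A ⫝^γ_C B and C ⊆ D ⊆ B, then A ⫝^γ_D B. -/
lemma clγ_mono {T : Type*} [SemilatticeInf T] (γ : T) {X Y : Set T} (h : X ⊆ Y) :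
    clγ γ X ⊆ clγ γ Y := by
  intro t ht
  induction ht with
  | base hx =>
      refine MeetGen.base ?_
      rcases hx with hx | hx
      · exact Or.inl (h hx)
      · exact Or.inr hx
  | inf _ _ ih1 ih2 => exact MeetGen.inf ih1 ih2

lemma clγ_inf {T : Type*} [SemilatticeInf T] {γ : T} {X : Set T} {a b : T}
    (ha : a ∈ clγ γ X) (hb : b ∈ clγ γ X) : a ⊓ b ∈ clγ γ X :=
  MeetGen.inf ha hb

lemma clγ_split {T : Type*} [SemilatticeInf T] {γ : T} {X Y : Set T} {a : T}
    (ha : a ∈ clγ γ (X ∪ Y)) :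
    a ∈ clγ γ X ∨ a ∈ clγ γ Y ∨
      ∃ x ∈ clγ γ X, ∃ y ∈ clγ γ Y, a = x ⊓ y := by
  induction ha with
  | base hx =>
      rcases hx with (hx | hx) | hx
      · exact Or.inl (MeetGen.base (Or.inl hx))
      · exact Or.inr (Or.inl (MeetGen.base (Or.inl hx)))
      · exact Or.inl (MeetGen.base (Or.inr hx))
  | @inf a b _ _ ih1 ih2 =>
      rcases ih1 with h1 | h1 | ⟨x, hx, y, hy, rfl⟩ <;>
        rcases ih2 with h2 | h2 | ⟨x', hx', y', hy', rfl⟩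
      · exact Or.inl (MeetGen.inf h1 h2)
      · exact Or.inr (Or.inr ⟨a, h1, b, h2, rfl⟩)
      · exact Or.inr (Or.inr ⟨a ⊓ x', MeetGen.inf h1 hx', y', hy',
          (inf_assoc a x' y').symm⟩)
      · exact Or.inr (Or.inr ⟨b, h2, a, h1, inf_comm a b⟩)
      · exact Or.inr (Or.inl (MeetGen.inf h1 h2))
      · exact Or.inr (Or.inr ⟨x', hx', a ⊓ y', MeetGen.inf h1 hy',
          inf_left_comm a x' y'⟩)
      · exact Or.inr (Or.inr ⟨x ⊓ b, MeetGen.inf hx h2, y, hy,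
          inf_right_comm x y b⟩)
      · exact Or.inr (Or.inr ⟨x, hx, y ⊓ b, MeetGen.inf hy h2,
          inf_assoc x y b⟩)
      · exact Or.inr (Or.inr ⟨x ⊓ x', MeetGen.inf hx hx', y ⊓ y',
          MeetGen.inf hy hy', inf_inf_inf_comm x y x' y'⟩)

/-- Right base monotonicity: if `A ⫝^γ_C B` and `C ⊆ D ⊆ B`, then `A ⫝^γ_D B`. -/
theorem coneIndep_baseMono {T : Type*} [SemilatticeInf T]
    (hsl : ∀ a : T, IsChain (· ≤ ·) {x : T | x < a})
    (γ : T) (A B C D : Set T) (h : ConeIndep γ A C B)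
    (hCD : C ⊆ D) (hDB : D ⊆ B) :
    ConeIndep γ A D B := by
  have hCB : C ⊆ B := hCD.trans hDB
  have hBD : B ∪ D = B := Set.union_eq_left.mpr hDB
  have hBC : B ∪ C = B := Set.union_eq_left.mpr hCB
  have hACmono : clγ γ A ⊆ clγ γ (A ∪ C) := clγ_mono γ Set.subset_union_left
  have hCDcl : clγ γ C ⊆ clγ γ D := clγ_mono γ hCD
  have hDBcl : clγ γ D ⊆ clγ γ B := clγ_mono γ hDB
  constructor
  · intro a ha b hb hba
    rw [hBD] at hb
    rw [← hBC] at hb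
    rcases clγ_split ha with haA | haD | ⟨x, hx, y, hy, rfl⟩
    · obtain ⟨c, hc, hbc, hca⟩ := h.1 a (hACmono haA) b hb hba
      exact ⟨c, hCDcl hc, hbc, hca⟩
    · exact ⟨a, haD, hba, le_rfl⟩
    · obtain ⟨c, hc, hbc, hcx⟩ := h.1 x (hACmono hx) b hb (hba.trans inf_le_left)
      refine ⟨c ⊓ y, clγ_inf (hCDcl hc) hy, le_inf hbc (hba.trans inf_le_right),
        inf_le_inf hcx le_rfl⟩
  · intro a ha b hb hab
    rw [hBD] at hb
    have hb' : b ∈ clγ γ (B ∪ C) := by rw [hBC]; exact hb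
    rcases clγ_split ha with haA | haD | ⟨x, hx, y, hy, rfl⟩
    · have habC : a ⊓ b ∉ clγ γ C := fun hc => hab (hCDcl hc)
      obtain ⟨c, hc, hne⟩ := h.2 a (hACmono haA) b hb' habC
      exact ⟨c, hCDcl hc, hne⟩
    · refine ⟨a, haD, fun heq => hab ?_⟩
      have : a ⊓ b = a := by
        rw [inf_idem] at heq
        rw [inf_comm, ← heq]
      rw [this]; exact haD
    · -- a = x ⊓ y, x ∈ clγ A, y ∈ clγ D
      by_cases hxy : x ⊓ y ⊓ y = b ⊓ y
      · -- then x ⊓ y ⊓ b = b ⊓ y ≤ x, contradiction with (i)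
        exfalso
        have hxyy : x ⊓ y ⊓ y = x ⊓ y := by rw [inf_assoc, inf_idem]
        rw [hxyy] at hxy
        -- x ⊓ y = b ⊓ y
        have hab' : x ⊓ y ⊓ b = x ⊓ y := by
          rw [hxy, inf_right_comm, inf_idem, ← hxy]
        have hby : b ⊓ y ∈ clγ γ (B ∪ C) := by
          rw [hBC]; exact clγ_inf hb (hDBcl hy)
        have hle : b ⊓ y ≤ x := hxy ▸ inf_le_left
        obtain ⟨c, hc, hbyc, hcx⟩ := h.1 x (hACmono hx) (b ⊓ y) hby hle
        apply hab
        have : c ⊓ y = x ⊓ y ⊓ b := by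
          apply le_antisymm
          · rw [hab']
            exact inf_le_inf hcx le_rfl
          · rw [hab', hxy]
            exact le_inf hbyc inf_le_right
        rw [← this]
        exact clγ_inf (hCDcl hc) hy
      · exact ⟨y, hy, hxy⟩
end

section
/- Let T be a meet-tree, γ a point, and A, B, C subsets. Assume that for all a ∈ A and b ∈ B: if a ≥ γ then a ⊓ b ≤ γ, and if a ⊓ γ < γ then a ⊓ γ < b ⊓ γ. Then A is γ-cone-independent of B over C. -/
section Helpers

variable {T : Type*} [SemilatticeInf T]

/-- Any two elements below a common element are comparable in a semilinear order. -/
private lemma cmp_below (hsl : ∀ a : T, IsChain (· ≤ ·) {x : T | x < a})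
    {x y b : T} (hx : x ≤ b) (hy : y ≤ b) : x ≤ y ∨ y ≤ x := by
  rcases eq_or_lt_of_le hx with rfl | hx'
  · exact Or.inr hy
  rcases eq_or_lt_of_le hy with rfl | hy'
  · exact Or.inl hx'.le
  rcases eq_or_ne x y with rfl | hne
  · exact Or.inl le_rfl
  exact hsl b hx' hy' hne

private lemma meetGen_exists_le {X : Set T} {t : T} (h : MeetGen X t) :
    ∃ x ∈ X, t ≤ x := by
  induction h with
  | base hx => exact ⟨_, hx, le_rfl⟩
  | inf h1 h2 ih1 ih2 =>
    obtain ⟨x, hx, hle⟩ := ih1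
    exact ⟨x, hx, inf_le_left.trans hle⟩

private lemma inf_inf_gamma (u v γ : T) : u ⊓ v ⊓ γ = (u ⊓ γ) ⊓ (v ⊓ γ) := by
  refine le_antisymm (le_inf (le_inf (inf_le_left.trans inf_le_left) inf_le_right)
    (le_inf (inf_le_left.trans inf_le_right) inf_le_right)) ?_
  exact le_inf (le_inf (inf_le_left.trans inf_le_left) (inf_le_right.trans inf_le_left))
    (inf_le_left.trans inf_le_right)

/-- A pure meet of elements of `A` has the same meet with `γ` as some single element of `A`
lying above it. -/
private lemma gmin (hsl : ∀ a : T, IsChain (· ≤ ·) {x : T | x < a})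
    {A : Set T} (γ : T) {α : T} (h : MeetGen A α) :
    ∃ a ∈ A, α ≤ a ∧ α ⊓ γ = a ⊓ γ := by
  induction h with
  | base hx => exact ⟨_, hx, le_rfl, rfl⟩
  | @inf u v h1 h2 ih1 ih2 =>
    obtain ⟨a, ha, hle, he⟩ := ih1
    obtain ⟨a', ha', hle', he'⟩ := ih2
    rcases cmp_below hsl (inf_le_right : a ⊓ γ ≤ γ) (inf_le_right : a' ⊓ γ ≤ γ) with hc | hc
    · exact ⟨a, ha, inf_le_left.trans hle, by
        rw [inf_inf_gamma, he, he', inf_eq_left.mpr hc]⟩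
    · exact ⟨a', ha', inf_le_right.trans hle', by
        rw [inf_inf_gamma, he, he', inf_eq_right.mpr hc]⟩

/-- Decomposition of an element of `⟨A ∪ C⟩_γ`. -/
private lemma decomp {A C : Set T} {γ t : T} (ht : t ∈ clγ γ (A ∪ C)) :
    t ∈ clγ γ C ∨ ∃ α, MeetGen A α ∧ (t = α ∨ ∃ d ∈ clγ γ C, t = α ⊓ d) := by
  have ht' : MeetGen (A ∪ C ∪ {γ}) t := ht
  clear ht
  induction ht' with
  | @base x hx =>
    rcases hx with (hx | hx) | hx
    · exact Or.inr ⟨x, MeetGen.base hx, Or.inl rfl⟩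
    · exact Or.inl (MeetGen.base (Or.inl hx))
    · exact Or.inl (MeetGen.base (Or.inr hx))
  | @inf u v h1 h2 ih1 ih2 =>
    rcases ih1 with hu | ⟨α, hα, (rfl | ⟨d, hd, rfl⟩)⟩ <;>
      rcases ih2 with hv | ⟨β, hβ, (rfl | ⟨e, he, rfl⟩)⟩
    · exact Or.inl (MeetGen.inf hu hv)
    · exact Or.inr ⟨v, hβ, Or.inr ⟨u, hu, inf_comm u v⟩⟩
    · exact Or.inr ⟨β, hβ, Or.inr ⟨e ⊓ u, MeetGen.inf he hu, by ac_rfl⟩⟩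
    · exact Or.inr ⟨u, hα, Or.inr ⟨v, hv, rfl⟩⟩
    · exact Or.inr ⟨u ⊓ v, MeetGen.inf hα hβ, Or.inl rfl⟩
    · exact Or.inr ⟨u ⊓ β, MeetGen.inf hα hβ, Or.inr ⟨e, he, by ac_rfl⟩⟩
    · exact Or.inr ⟨α, hα, Or.inr ⟨d ⊓ v, MeetGen.inf hd hv, inf_assoc α d v⟩⟩
    · exact Or.inr ⟨α ⊓ v, MeetGen.inf hα hβ, Or.inr ⟨d, hd, by ac_rfl⟩⟩
    · exact Or.inr ⟨α ⊓ β, MeetGen.inf hα hβ, Or.inr ⟨d ⊓ e, MeetGen.inf hd he, by ac_rfl⟩⟩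

private lemma infAB_le (hsl : ∀ a : T, IsChain (· ≤ ·) {x : T | x < a})
    {γ : T} {A B : Set T}
    (h : ∀ a ∈ A, ∀ b ∈ B, (γ ≤ a → a ⊓ b ≤ γ) ∧ (a ⊓ γ < γ → a ⊓ γ < b ⊓ γ))
    {a b : T} (ha : a ∈ A) (hb : b ∈ B) : a ⊓ b ≤ γ := by
  obtain ⟨h1, h2⟩ := h a ha b hb
  by_cases hγ : γ ≤ a
  · exact h1 hγ
  · have hlt : a ⊓ γ < γ :=
      lt_of_le_of_ne inf_le_right (fun e => hγ (e.symm.le.trans inf_le_left))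
    have h2' := h2 hlt
    rcases cmp_below hsl (inf_le_right : a ⊓ b ≤ b) (inf_le_left : b ⊓ γ ≤ b) with hc | hc
    · exact hc.trans inf_le_right
    · exact absurd (le_inf (hc.trans inf_le_left) inf_le_right) h2'.not_ge

end Helpers

/-- Easy independence: if for all `a ∈ A`, `b ∈ B` we have `a ⊓ b ≤ γ` whenever
`γ ≤ a`, and `a ⊓ γ < b ⊓ γ` whenever `a ⊓ γ < γ`, then `A ⫝^γ_C B`. -/
theorem coneIndep_easy {T : Type*} [SemilatticeInf T]
    (hsl : ∀ a : T, IsChain (· ≤ ·) {x : T | x < a})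
    (γ : T) (A B C : Set T)
    (h : ∀ a ∈ A, ∀ b ∈ B, (γ ≤ a → a ⊓ b ≤ γ) ∧ (a ⊓ γ < γ → a ⊓ γ < b ⊓ γ)) :
    ConeIndep γ A C B := by
  have hγmem : γ ∈ clγ γ C := MeetGen.base (Or.inr rfl)
  have hinfC : ∀ {x y : T}, x ∈ clγ γ C → y ∈ clγ γ C → x ⊓ y ∈ clγ γ C :=
    fun hx hy => MeetGen.inf hx hy
  constructor
  · rintro a ha b hb hba
    rcases decomp ha with haC | ⟨α, hα, haf⟩
    · exact ⟨a, haC, hba, le_rfl⟩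
    rcases decomp hb with hbC | ⟨β, hβ, hbf⟩
    · exact ⟨b, hbC, le_rfl, hba⟩
    obtain ⟨a₀, ha₀, hαa, hpa⟩ := gmin hsl γ hα
    obtain ⟨b₀, hb₀, hβb, hpb⟩ := gmin hsl γ hβ
    have haα : a ≤ α := by
      rcases haf with rfl | ⟨d, hd, rfl⟩
      · exact le_rfl
      · exact inf_le_left
    have hbβ : b ≤ β := by
      rcases hbf with rfl | ⟨e, he, rfl⟩
      · exact le_rfl
      · exact inf_le_left
    have hbγ : b ≤ γ :=
      (le_inf ((hba.trans haα).trans hαa) (hbβ.trans hβb)).trans (infAB_le hsl h ha₀ hb₀)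
    by_cases hγα : γ ≤ α
    · rcases haf with rfl | ⟨d, hd, rfl⟩
      · exact ⟨γ, hγmem, hbγ, hγα⟩
      · exact ⟨d ⊓ γ, hinfC hd hγmem,
          le_inf (hba.trans inf_le_right) hbγ,
          le_inf (inf_le_right.trans hγα) inf_le_left⟩
    · -- p := α ⊓ γ < γ
      have hplt : α ⊓ γ < γ :=
        lt_of_le_of_ne inf_le_right (fun e => hγα (e.symm.le.trans inf_le_left))
      have hpa' : a₀ ⊓ γ < γ := hpa ▸ hplt
      have h2 := (h a₀ ha₀ b₀ hb₀).2 hpa'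
      -- b ≤ a₀ ⊓ γ
      have hab₀ : a₀ ⊓ b₀ = a₀ ⊓ γ :=
        le_antisymm (le_inf inf_le_left (infAB_le hsl h ha₀ hb₀))
          (le_inf inf_le_left (h2.le.trans inf_le_left))
      have hbp : b ≤ a₀ ⊓ γ :=
        hab₀ ▸ le_inf ((hba.trans haα).trans hαa) (hbβ.trans hβb)
      rcases hbf with rfl | ⟨e, he, rfl⟩
      · -- b = β, so β = β ⊓ γ = b₀ ⊓ γ > a₀ ⊓ γ ≥ b : contradiction
        have hcon : b₀ ⊓ γ ≤ a₀ ⊓ γ := by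
          rw [← hpb, inf_eq_left.mpr hbγ]; exact hbp
        exact absurd hcon h2.not_ge
      · rcases cmp_below hsl (inf_le_right : β ⊓ γ ≤ γ) (inf_le_right : e ⊓ γ ≤ γ) with hc | hc
        · have hcon : b₀ ⊓ γ ≤ a₀ ⊓ γ := by
            rw [← hpb, ← inf_eq_left.mpr hc, ← inf_inf_gamma]
            exact inf_le_left.trans hbp
          exact absurd hcon h2.not_ge
        · have hbeq : β ⊓ e = e ⊓ γ := by
            conv_lhs => rw [← inf_eq_left.mpr hbγ]
            rw [inf_inf_gamma]
            exact inf_eq_right.mpr hc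
          exact ⟨β ⊓ e, by rw [hbeq]; exact hinfC he hγmem, le_rfl, hba⟩
  · rintro a ha b hb hnot
    rcases decomp ha with haC | ⟨α, hα, haf⟩
    · refine ⟨a, haC, fun heq => hnot ?_⟩
      rw [inf_idem] at heq
      have hab : a ⊓ b = a := inf_eq_left.mpr (heq.le.trans inf_le_left)
      rw [hab]; exact haC
    rcases decomp hb with hbC | ⟨β, hβ, hbf⟩
    · refine ⟨b, hbC, fun heq => hnot ?_⟩
      rw [inf_idem] at heq
      rw [heq]; exact hbC
    obtain ⟨a₀, ha₀, hαa, hpa⟩ := gmin hsl γ hα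
    obtain ⟨b₀, hb₀, hβb, hpb⟩ := gmin hsl γ hβ
    have haα : a ≤ α := by
      rcases haf with rfl | ⟨d, hd, rfl⟩
      · exact le_rfl
      · exact inf_le_left
    have hbβ : b ≤ β := by
      rcases hbf with rfl | ⟨e, he, rfl⟩
      · exact le_rfl
      · exact inf_le_left
    refine ⟨γ, hγmem, fun heq => ?_⟩
    -- a ⊓ b ≤ γ
    have habγ : a ⊓ b ≤ γ :=
      (inf_le_inf (haα.trans hαa) (hbβ.trans hβb)).trans (infAB_le hsl h ha₀ hb₀)
    -- a ⊓ b = a ⊓ γ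
    have hab : a ⊓ b = a ⊓ γ :=
      le_antisymm (le_inf inf_le_left habγ)
        (le_inf inf_le_left (heq.le.trans inf_le_left))
    -- side analysis for a
    have hA : a ⊓ γ ∈ clγ γ C ∨ a ⊓ γ = a₀ ⊓ γ := by
      rcases haf with rfl | ⟨d, hd, rfl⟩
      · exact Or.inr hpa
      · have : α ⊓ d ⊓ γ = (α ⊓ γ) ⊓ (d ⊓ γ) := inf_inf_gamma α d γ
        rcases cmp_below hsl (inf_le_right : α ⊓ γ ≤ γ) (inf_le_right : d ⊓ γ ≤ γ) with hc | hc
        · exact Or.inr (by rw [this, inf_eq_left.mpr hc, hpa])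
        · exact Or.inl (by rw [this, inf_eq_right.mpr hc]; exact hinfC hd hγmem)
    have hB : b ⊓ γ ∈ clγ γ C ∨ b ⊓ γ = b₀ ⊓ γ := by
      rcases hbf with rfl | ⟨e, he, rfl⟩
      · exact Or.inr hpb
      · have : β ⊓ e ⊓ γ = (β ⊓ γ) ⊓ (e ⊓ γ) := inf_inf_gamma β e γ
        rcases cmp_below hsl (inf_le_right : β ⊓ γ ≤ γ) (inf_le_right : e ⊓ γ ≤ γ) with hc | hc
        · exact Or.inr (by rw [this, inf_eq_left.mpr hc, hpb])
        · exact Or.inl (by rw [this, inf_eq_right.mpr hc]; exact hinfC he hγmem)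
    rcases hA with hA | hA
    · exact hnot (by rw [hab]; exact hA)
    rcases hB with hB | hB
    · exact hnot (by rw [hab, heq]; exact hB)
    -- now a₀ ⊓ γ = b₀ ⊓ γ
    have hkey : a₀ ⊓ γ = b₀ ⊓ γ := by rw [← hA, ← hB, heq]
    by_cases hγa : γ ≤ a₀
    · have haγ : a ⊓ γ = γ := by rw [hA, inf_eq_right.mpr hγa]
      exact hnot (by rw [hab, haγ]; exact hγmem)
    · have hlt : a₀ ⊓ γ < γ :=
        lt_of_le_of_ne inf_le_right (fun e => hγa (e.symm.le.trans inf_le_left))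
      exact absurd hkey ((h a₀ ha₀ b₀ hb₀).2 hlt).ne
end

section
/- Let T be a meet-tree and α an automorphism of T (an order- and meet-preserving bijection). Then either α setwise fixes some branch (maximal chain) of T, or α is a fan: there exists a point γ with α(γ) = γ such that a ⊓ α(a) = γ for every a ≥ γ. -/
/-!
Take, by Zorn's lemma, a maximal chain `Γ` among the chains that `α` fixes setwise. Adding to `Γ`
the `α`-orbit of a point keeps it invariant, so maximality puts into `Γ` every point whose orbit is
comparable with `Γ`: in a semilinear order this is everything below `Γ`, and every upper bound `c`
of `Γ` comparable with `α c`. If `Γ` is not a branch it has an upper bound `a`, and then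
`a ⊓ α a` is such a `c`; it is therefore the greatest element of `Γ`, fixed by `α`, and it equals
`b ⊓ α b` for every `b` above it.
-/

open Set Pointwise

section Orbit

variable {T : Type*} [Preorder T] (α : T ≃o T)

theorem OrderIso.image_range_zpow_apply (c : T) :
    α '' range (fun n : ℤ => (α ^ n) c) = range (fun n : ℤ => (α ^ n) c) := by
  have : (α ∘ fun n : ℤ => (α ^ n) c) = (fun n : ℤ => (α ^ n) c) ∘ (1 + ·) := by
    ext n; simp [zpow_one_add, RelIso.mul_apply]
  rw [← range_comp, this, (add_left_surjective 1).range_comp]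

theorem OrderIso.zpow_image_eq {s : Set T} (hs : α '' s = s) (n : ℤ) : (α ^ n) '' s = s := by
  have : α ∈ MulAction.stabilizer (T ≃o T) s := by
    simpa [MulAction.mem_stabilizer_iff, ← Set.image_smul] using hs
  simpa [MulAction.mem_stabilizer_iff, ← Set.image_smul] using Subgroup.zpow_mem _ this n

theorem OrderIso.isChain_range_zpow_apply {c : T} (hc : c ≤ α c ∨ α c ≤ c) :
    IsChain (· ≤ ·) (range fun n : ℤ => (α ^ n) c) := by
  have step : ∀ n : ℤ, (α ^ (n + 1)) c = (α ^ n) (α c) := fun n => by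
    rw [zpow_add_one, RelIso.mul_apply]
  rcases hc with hc | hc
  · exact Monotone.isChain_range <| monotone_int_of_le_succ fun n => by
      rw [step]; exact (α ^ n).monotone hc
  · exact Antitone.isChain_range <| antitone_int_of_succ_le fun n => by
      rw [step]; exact (α ^ n).monotone hc

end Orbit

theorem IsChain.sUnion_of_isChain {α : Type*} {r : α → α → Prop} {c : Set (Set α)}
    (hc : IsChain (· ⊆ ·) c) (h : ∀ s ∈ c, IsChain r s) : IsChain r (⋃₀ c) := by
  rintro x ⟨s, hs, hxs⟩ y ⟨t, ht, hyt⟩ hne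
  rcases hc.total hs ht with hst | hts
  · exact h t ht (hst hxs) hyt hne
  · exact h s hs hxs (hts hyt) hne

theorem IsChain.upperBounds_nonempty_of_not_isMaxChain {T : Type*} [Preorder T] {Γ : Set T}
    (hΓ : IsChain (· ≤ ·) Γ) (hlow : IsLowerSet Γ) (hmax : ¬IsMaxChain (· ≤ ·) Γ) :
    (upperBounds Γ).Nonempty := by
  obtain ⟨t, ht, hΓt, hne⟩ : ∃ t, IsChain (· ≤ ·) t ∧ Γ ⊆ t ∧ Γ ≠ t := by
    simpa [IsMaxChain, hΓ] using hmax
  obtain ⟨a, hat, haΓ⟩ := exists_of_ssubset (ssubset_of_subset_of_ne hΓt hne)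
  refine ⟨a, fun g hg => ?_⟩
  rcases ht.total (hΓt hg) hat with hga | hag
  · exact hga
  · exact absurd (hlow hag hg) haΓ

section InvariantChain

variable {T : Type*} [Preorder T] {α : T ≃o T}

def IsInvariantChain (α : T ≃o T) (s : Set T) : Prop :=
  IsChain (· ≤ ·) s ∧ α '' s = s

theorem exists_maximal_isInvariantChain (α : T ≃o T) :
    ∃ Γ, Maximal (IsInvariantChain α) Γ := by
  refine zorn_subset {s | IsInvariantChain α s} fun c hc hchain => ?_
  refine ⟨⋃₀ c, ⟨hchain.sUnion_of_isChain fun s hs => (hc hs).1, ?_⟩,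
    fun s hs => subset_sUnion_of_mem hs⟩
  rw [image_sUnion, image_congr (g := id) fun s hs => (hc hs).2, image_id]

theorem Maximal.mem_of_isChain_union_range_zpow_apply {Γ : Set T}
    (hΓ : Maximal (IsInvariantChain α) Γ) {c : T}
    (hchain : IsChain (· ≤ ·) (Γ ∪ range fun n : ℤ => (α ^ n) c)) : c ∈ Γ := by
  have hinv : IsInvariantChain α (Γ ∪ range fun n : ℤ => (α ^ n) c) :=
    ⟨hchain, by rw [image_union, hΓ.1.2, α.image_range_zpow_apply]⟩
  rw [hΓ.eq_of_subset hinv subset_union_left]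
  exact Or.inr ⟨0, rfl⟩

theorem Maximal.mem_of_mem_upperBounds {Γ : Set T} (hΓ : Maximal (IsInvariantChain α) Γ)
    {c : T} (hc : c ∈ upperBounds Γ) (hcomp : c ≤ α c ∨ α c ≤ c) : c ∈ Γ := by
  have horbit : (range fun n : ℤ => (α ^ n) c) ⊆ upperBounds Γ := by
    have hU : α '' upperBounds Γ = upperBounds Γ := by rw [← α.upperBounds_image, hΓ.1.2]
    rintro _ ⟨n, rfl⟩
    exact α.zpow_image_eq hU n ▸ mem_image_of_mem _ hc
  exact hΓ.mem_of_isChain_union_range_zpow_apply <| isChain_union.2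
    ⟨hΓ.1.1, α.isChain_range_zpow_apply hcomp, fun a ha b hb _ => Or.inl (horbit hb ha)⟩

end InvariantChain

def IsSemilinearOrder (T : Type*) [Preorder T] : Prop :=
  ∀ a : T, IsChain (· ≤ ·) (Iio a)

section Semilinear

variable {T : Type*} [PartialOrder T] (hT : IsSemilinearOrder T)
include hT

theorem IsSemilinearOrder.isChain_Iic (a : T) : IsChain (· ≤ ·) (Iic a) := by
  rw [← Iio_insert]
  exact (hT a).insert fun b hb _ => Or.inr hb.le

theorem IsChain.lowerClosure {s : Set T} (hs : IsChain (· ≤ ·) s) :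
    IsChain (· ≤ ·) (lowerClosure s : Set T) := by
  rintro x ⟨a, ha, hxa⟩ y ⟨b, hb, hyb⟩ hne
  rcases hs.total ha hb with hab | hba
  · exact hT.isChain_Iic b (hxa.trans hab) hyb hne
  · exact hT.isChain_Iic a hxa (hyb.trans hba) hne

theorem Maximal.isLowerSet {α : T ≃o T} {Γ : Set T}
    (hΓ : Maximal (IsInvariantChain α) Γ) : IsLowerSet Γ := by
  have hinv : IsInvariantChain α (lowerClosure Γ : Set T) := by
    refine ⟨hΓ.1.1.lowerClosure hT, ?_⟩
    rw [← LowerSet.coe_map, ← lowerClosure_image, hΓ.1.2]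
  rw [← hΓ.eq_of_superset hinv subset_lowerClosure]
  exact LowerSet.lower _

end Semilinear

theorem Maximal.isGreatest_inf_apply {T : Type*} [SemilatticeInf T] (hT : IsSemilinearOrder T)
    {α : T ≃o T} {Γ : Set T} (hΓ : Maximal (IsInvariantChain α) Γ) {a : T}
    (ha : a ∈ upperBounds Γ) : IsGreatest Γ (a ⊓ α a) := by
  have hαa : α a ∈ upperBounds Γ := hΓ.1.2 ▸ α.monotone.mem_upperBounds_image ha
  have hub : a ⊓ α a ∈ upperBounds Γ := fun g hg => le_inf (ha hg) (hαa hg)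
  refine ⟨hΓ.mem_of_mem_upperBounds hub ?_, hub⟩
  -- both `a ⊓ α a` and its image lie below `α a`
  exact (hT.isChain_Iic (α a)).total inf_le_right (α.monotone inf_le_left)

/-- Dichotomy for automorphisms of a meet-tree: every automorphism either
setwise fixes some branch (maximal chain), or is a fan: there is a fixed point
`γ` with `a ⊓ α a = γ` for every `a ≥ γ`. -/
theorem fix_branch_or_fan {T : Type*} [SemilatticeInf T]
    (hsl : ∀ a : T, IsChain (· ≤ ·) {x : T | x < a})
    (α : T ≃o T) :
    (∃ Γ : Set T, IsMaxChain (· ≤ ·) Γ ∧ α '' Γ = Γ) ∨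
    (∃ γ : T, α γ = γ ∧ ∀ a : T, γ ≤ a → a ⊓ α a = γ) := by
  obtain ⟨Γ, hΓ⟩ := exists_maximal_isInvariantChain α
  by_cases hmax : IsMaxChain (· ≤ ·) Γ
  · exact Or.inl ⟨Γ, hmax, hΓ.1.2⟩
  obtain ⟨a, ha⟩ := hΓ.1.1.upperBounds_nonempty_of_not_isMaxChain (hΓ.isLowerSet hsl) hmax
  have hγ := hΓ.isGreatest_inf_apply hsl ha
  set γ := a ⊓ α a
  have hfix : α γ = γ := (hΓ.1.2 ▸ α.monotone.map_isGreatest hγ).unique hγ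
  refine Or.inr ⟨γ, hfix, fun b hγb => le_antisymm ?_ ?_⟩
  · exact hγ.2 (hΓ.isGreatest_inf_apply hsl fun g hg => (hγ.2 hg).trans hγb).1
  · exact le_inf hγb (hfix ▸ α.monotone hγb)
end

section
/- Let ⫝ be a ternary relation on finite tuples of a homogeneous structure satisfying invariance (under automorphisms/type equality), monotonicity, normality, left and right base monotonicity and transitivity, existence (a ⫝_C C, together with the trivialities a ⫝_A B and A ⫝_B B), and left extension (if a ⫝_C b and a ⊆ a′ then there is a″ ≡_C a′ with a″ ⫝_C b). Then ⫝ satisfies right extension: if a ⫝_c b and b ⊆ b′, then there is b″ ≡_c b′ with a ⫝_c b″. -/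
/-- Right extension follows from left extension together with invariance,
monotonicity, normality, base monotonicity, transitivity and existence, for a
ternary independence relation on subsets of a structure `M` whose automorphism
group is `G` (`a ≡_C b` is witnessed by an automorphism in `G` fixing `C`
pointwise). -/
theorem right_extension_of_left_extension {M : Type*}
    (G : Subgroup (Equiv.Perm M))
    (Ind : Set M → Set M → Set M → Prop)  -- `Ind A C B` means `A ⫝_C B`
    -- invariance
    (invariance : ∀ (g : Equiv.Perm M), g ∈ G → ∀ A C B : Set M,
      Ind A C B → Ind (g '' A) (g '' C) (g '' B))
    -- monotonicity
    (mono : ∀ A A₀ C B B₀ : Set M, Ind A C B → A₀ ⊆ A → B₀ ⊆ B → Ind A₀ C B₀)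
    -- normality
    (normality : ∀ A C B : Set M, Ind A C B → Ind (A ∪ C) C (B ∪ C))
    -- left and right base monotonicity
    (baseMonoL : ∀ A C D B : Set M, Ind A C B → C ⊆ D → D ⊆ A → Ind A D B)
    (baseMonoR : ∀ A C D B : Set M, Ind A C B → C ⊆ D → D ⊆ B → Ind A D B)
    -- left and right transitivity
    (transL : ∀ A C D B : Set M, Ind A D B → Ind D C B → C ⊆ D → D ⊆ A → Ind A C B)
    (transR : ∀ A C D B : Set M, Ind A D B → Ind A C D → C ⊆ D → D ⊆ B → Ind A C B)
    -- existence
    (existence : ∀ A B : Set M, Ind A A B ∧ Ind A B B)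
    -- left extension
    (extL : ∀ a a' C b : Set M, Ind a C b → a ⊆ a' →
      ∃ g : Equiv.Perm M, g ∈ G ∧ (∀ c ∈ C, g c = c) ∧ Ind (g '' a') C b) :
    -- right extension
    ∀ a C b b' : Set M, Ind a C b → b ⊆ b' →
      ∃ g : Equiv.Perm M, g ∈ G ∧ (∀ c ∈ C, g c = c) ∧ Ind a C (g '' b') := by
  intro a C b b' hab hbb'
  have h1 : Ind a C (b ∪ C) :=
    mono _ _ _ _ _ (normality a C b hab) Set.subset_union_left subset_rfl
  have h2 : Ind (b ∪ C) (b ∪ C) (b' ∪ C) := (existence (b ∪ C) (b' ∪ C)).1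
  obtain ⟨g, hg, hfix, h3⟩ :=
    extL (b ∪ C) (a ∪ (b ∪ C)) (b ∪ C) (b' ∪ C) h2 Set.subset_union_right
  have h4 : Ind (g '' a) (b ∪ C) (b' ∪ C) :=
    mono _ _ _ _ _ h3 (Set.image_mono Set.subset_union_left) subset_rfl
  have hginv : g⁻¹ ∈ G := G.inv_mem hg
  have hcoe : (⇑(g⁻¹) : M → M) = ⇑g.symm := rfl
  have hfix' : ∀ x ∈ b ∪ C, g.symm x = x := by
    intro x hx
    conv_lhs => rw [← hfix x hx]
    exact g.symm_apply_apply x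
  have himg : (⇑g.symm) '' (b ∪ C) = b ∪ C := by
    ext y
    constructor
    · rintro ⟨x, hx, rfl⟩; rw [hfix' x hx]; exact hx
    · intro hy; exact ⟨y, hy, hfix' y hy⟩
  have h5 := invariance g⁻¹ hginv _ _ _ h4
  rw [hcoe] at h5
  have e1 : (⇑g.symm) '' (⇑g '' a) = a := by
    ext y; simp
  rw [e1, himg] at h5
  have hsub : b ∪ C ⊆ (⇑g.symm) '' (b' ∪ C) := by
    intro x hx
    refine ⟨g x, ?_, g.symm_apply_apply x⟩
    rw [hfix x hx]
    exact Set.union_subset (hbb'.trans Set.subset_union_left) Set.subset_union_right hx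
  have h6 : Ind a C ((⇑g.symm) '' (b' ∪ C)) :=
    transR a C (b ∪ C) _ h5 h1 Set.subset_union_right hsub
  refine ⟨g⁻¹, hginv, fun c hc => hfix' c (Or.inr hc), ?_⟩
  rw [show (⇑(g⁻¹) : M → M) '' b' = ⇑g.symm '' b' from by rw [hcoe]]
  exact mono _ _ _ _ _ h6 subset_rfl (Set.image_mono Set.subset_union_left)
end
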